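/- Let n ≥ 1, R = R₀, and let R_i = R_{i-1}[x_i;σ_i,δ_i] (1 ≤ i ≤ n) be iterated Ore extensions such that: (i) for all 1 ≤ i ≤ n, σ_i restricts to an automorphism of R₀; (ii) for all 1 ≤ j < i ≤ n, σ_i(x_j) = a_{ij}x_j + c_{ij} where a_{ij} ∈ R₀ is invertible and c_{ij} ∈ R_{j-1}. Then for all 0 ≤ j < i ≤ n, the restriction σ_i|_{R_j} is an automorphism of R_j, and for j ≥ 1 it respects the filtration of R_j given by the degree in x_j (i.e., σ_i maps the set of elements of R_j of x_j-degree at most d onto itself, for every d). -/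

import Mathlib

universe u v w

/-- `δ` is a `σ`-derivation of `R`: an additive map satisfying the twisted Leibniz rule
`δ (a * b) = σ a * δ b + δ a * b`. -/
def IsSigmaDerivation {R : Type u} [Ring R] (σ : R ≃+* R) (δ : R → R) : Prop :=
  (∀ a b : R, δ (a + b) = δ a + δ b) ∧ (∀ a b : R, δ (a * b) = σ a * δ b + δ a * b)

/-- `δ` is a `q`-skew `σ`-derivation of `R`: a `σ`-derivation with `q` central,
`σ q = q`, `δ q = 0` and `δ ∘ σ = q • (σ ∘ δ)`. -/
def IsQSkewDerivation {R : Type u} [Ring R] (σ : R ≃+* R) (δ : R → R) (q : R) : Prop :=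
  IsSigmaDerivation σ δ ∧ q ∈ Subring.center R ∧ σ q = q ∧ δ q = 0 ∧
    ∀ r : R, δ (σ r) = q * σ (δ r)

/-- `S`, together with the embedding `ι : R →+* S` and the element `x : S`, is an Ore
extension `R[x;σ,δ]`: `x * r = σ r * x + δ r`, and every element of `S` is uniquely a left
polynomial `∑ aᵢ xⁱ` with coefficients in `R`. -/
structure IsOreExtension {R : Type u} {S : Type v} [Ring R] [Ring S]
    (ι : R →+* S) (x : S) (σ : R ≃+* R) (δ : R → R) : Prop where
  inj : Function.Injective ι
  sderiv : IsSigmaDerivation σ δ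
  rel : ∀ r : R, x * ι r = ι (σ r) * x + ι (δ r)
  gen : ∀ s : S, ∃ (m : ℕ) (a : ℕ → R), s = ∑ i ∈ Finset.range m, ι (a i) * x ^ i
  indep : ∀ (m : ℕ) (a : ℕ → R),
    (∑ i ∈ Finset.range m, ι (a i) * x ^ i) = 0 → ∀ i < m, a i = 0

/-- The coefficients (indexed by words in the free monoid) of an element of the free
`ℤ`-algebra on countably many noncommuting variables. -/
noncomputable def piCoeffs (p : FreeAlgebra ℤ ℕ) : MonoidAlgebra ℤ (FreeMonoid ℕ) :=
  FreeAlgebra.equivMonoidAlgebraFreeMonoid p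

/-- A ring `A` is a PI ring: some nonzero polynomial in the free `ℤ`-algebra on countably
many noncommuting variables, one of whose monomials of highest total degree has
coefficient `1`, vanishes under every substitution of elements of `A` for the variables. -/
def IsPIRing (A : Type u) [Ring A] : Prop :=
  ∃ p : FreeAlgebra ℤ ℕ, p ≠ 0 ∧
    (∃ w ∈ (piCoeffs p).coeff.support,
      (∀ w' ∈ (piCoeffs p).coeff.support, FreeMonoid.length w' ≤ FreeMonoid.length w) ∧
      (piCoeffs p).coeff w = 1) ∧
    ∀ f : ℕ → A, (FreeAlgebra.lift ℤ f) p = 0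

/-- `R` is a prime ring: `R ≠ 0` and `a R b = 0` implies `a = 0` or `b = 0`. -/
def IsPrimeRing (R : Type u) [Ring R] : Prop :=
  (0 : R) ≠ 1 ∧ ∀ a b : R, (∀ r : R, a * r * b = 0) → a = 0 ∨ b = 0

/-- `S` is a right Ore set in `R`. -/
def IsRightOreSet {R : Type u} [Ring R] (S : Set R) : Prop :=
  (1 : R) ∈ S ∧ (∀ s ∈ S, ∀ t ∈ S, s * t ∈ S) ∧
    ∀ (r : R), ∀ s ∈ S, ∃ (r' : R), ∃ s' ∈ S, r * s' = s * r'

/-- `ι : R →+* Q` realizes `Q` as the right Ore localization `R S⁻¹`: elements of `S`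
become units, every element of `Q` is a right fraction, and the kernel of `ι` is the set of
elements annihilated on the right by some element of `S`. -/
def IsRightLocalization {R : Type u} {Q : Type v} [Ring R] [Ring Q]
    (ι : R →+* Q) (S : Set R) : Prop :=
  (∀ s ∈ S, IsUnit (ι s)) ∧
  (∀ z : Q, ∃ (r : R) (s : R), s ∈ S ∧ z * ι s = ι r) ∧
  (∀ r : R, ι r = 0 → ∃ s ∈ S, r * s = 0)

/-- `ι : R →+* Q` realizes `Q` as the classical right quotient ring `Q(R)`, i.e. the right
Ore localization of `R` at the set of regular elements. -/
def IsClassicalRightQuotientRing {R : Type u} {Q : Type v} [Ring R] [Ring Q]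
    (ι : R →+* Q) : Prop :=
  IsRightLocalization ι {r : R | IsRegular r}

/-- The composite embedding `A j →+* A i` along a tower of rings. -/
def emb {A : ℕ → Type u} [∀ i, Ring (A i)] (ι : ∀ i, A i →+* A (i + 1)) (j i : ℕ)
    (h : j ≤ i) : A j →+* A i :=
  Nat.leRecOn h (fun {k} f => (ι k).comp f) (RingHom.id (A j))



variable {A : ℕ → Type u} [∀ i, Ring (A i)] (ι : ∀ i, A i →+* A (i + 1))

theorem emb_self (j : ℕ) : emb ι j j le_rfl = RingHom.id (A j) :=
  Nat.leRecOn_self _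

theorem emb_succ {j i : ℕ} (h : j ≤ i) {h' : j ≤ i + 1} :
    emb ι j (i + 1) h' = (ι i).comp (emb ι j i h) :=
  Nat.leRecOn_succ h _

theorem emb_step (j : ℕ) {h : j ≤ j + 1} : emb ι j (j + 1) h = ι j := by
  rw [emb_succ ι le_rfl, emb_self, RingHom.comp_id]

theorem emb_trans {j k i : ℕ} (h1 : j ≤ k) (h2 : k ≤ i) (a : A j) :
    emb ι k i h2 (emb ι j k h1 a) = emb ι j i (h1.trans h2) a := by
  induction i, h2 using Nat.le_induction with
  | base => rw [emb_self]; rfl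
  | succ i h2 IH =>
      rw [emb_succ ι h2, emb_succ ι (h1.trans h2)]
      exact congrArg (ι i) IH

theorem emb_comp {j i : ℕ} (h : j + 1 ≤ i) {h' : j ≤ i} (a : A j) :
    emb ι (j + 1) i h (ι j a) = emb ι j i h' a := by
  rw [← emb_step ι j (h := Nat.le_succ j)]
  exact emb_trans ι _ _ _

theorem emb_inj {j i : ℕ} (h : j ≤ i) (hι : ∀ k, j ≤ k → k < i → Function.Injective (ι k)) :
    Function.Injective (emb ι j i h) := by
  induction i, h using Nat.le_induction with
  | base => rw [emb_self]; exact fun a b hab => hab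
  | succ i h2 IH =>
      rw [emb_succ ι h2]
      exact (hι i h2 (by omega)).comp (IH fun k hk hk' => hι k hk (by omega))


variable {R : Type u} {S : Type v} [Ring R] [Ring S] (ι0 : R →+* S) (x0 : S)

def DegLe (d : ℕ) (r : S) : Prop :=
  ∃ b : ℕ → R, r = ∑ t ∈ Finset.range (d + 1), ι0 (b t) * x0 ^ t

variable {ι0 x0}

theorem degle_monomial {p d : ℕ} (hp : p ≤ d) (c : R) : DegLe ι0 x0 d (ι0 c * x0 ^ p) := by
  refine ⟨fun t => if t = p then c else 0, ?_⟩
  rw [Finset.sum_eq_single_of_mem p (Finset.mem_range.mpr (by omega))]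
  · simp
  · intro t _ ht; simp [ht]

theorem degle_zero (d : ℕ) : DegLe ι0 x0 d 0 := ⟨fun _ => 0, by simp⟩

theorem degle_add {d : ℕ} {r s : S} (hr : DegLe ι0 x0 d r) (hs : DegLe ι0 x0 d s) :
    DegLe ι0 x0 d (r + s) := by
  obtain ⟨b, rfl⟩ := hr; obtain ⟨b', rfl⟩ := hs
  exact ⟨b + b', by simp [add_mul, Finset.sum_add_distrib]⟩

theorem degle_neg {d : ℕ} {r : S} (hr : DegLe ι0 x0 d r) : DegLe ι0 x0 d (-r) := by
  obtain ⟨b, rfl⟩ := hr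
  exact ⟨-b, by simp [neg_mul, Finset.sum_neg_distrib]⟩

theorem degle_sum {β : Type w} {s : Finset β} {g : β → S} {d : ℕ}
    (h : ∀ t ∈ s, DegLe ι0 x0 d (g t)) : DegLe ι0 x0 d (∑ t ∈ s, g t) :=
  Finset.sum_induction g _ (fun _ _ => degle_add) (degle_zero d) h

theorem degle_mono {d e : ℕ} {r : S} (h : d ≤ e) (hr : DegLe ι0 x0 d r) :
    DegLe ι0 x0 e r := by
  obtain ⟨b, rfl⟩ := hr
  refine ⟨fun t => if t < d + 1 then b t else 0, ?_⟩
  show _ = ∑ t ∈ Finset.range (e + 1), ι0 (if t < d + 1 then b t else 0) * x0 ^ t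
  rw [← Finset.sum_subset (Finset.range_subset_range.mpr (by omega : d + 1 ≤ e + 1))
      (fun t _ ht => by rw [if_neg (by simpa using ht)]; simp)]
  exact (Finset.sum_congr rfl fun t htm => by
    rw [if_pos (Finset.mem_range.mp htm)]).symm

theorem degle_const_mul {d : ℕ} {r : S} (c : R) (hr : DegLe ι0 x0 d r) :
    DegLe ι0 x0 d (ι0 c * r) := by
  obtain ⟨b, rfl⟩ := hr
  exact ⟨fun t => c * b t, by simp [Finset.mul_sum, map_mul, mul_assoc]⟩

variable {σ0 δ0 : R → R}

theorem degle_xmul (hrel : ∀ r : R, x0 * ι0 r = ι0 (σ0 r) * x0 + ι0 (δ0 r))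
    {d : ℕ} {r : S} (h : DegLe ι0 x0 d r) : DegLe ι0 x0 (d + 1) (x0 * r) := by
  obtain ⟨b, rfl⟩ := h
  rw [Finset.mul_sum]
  refine degle_sum fun t htm => ?_
  have he : x0 * (ι0 (b t) * x0 ^ t)
      = ι0 (σ0 (b t)) * x0 ^ (t + 1) + ι0 (δ0 (b t)) * x0 ^ t := by
    rw [← mul_assoc, hrel, add_mul, mul_assoc, ← pow_succ']
  have ht := Finset.mem_range.mp htm
  rw [he]
  exact degle_add (degle_monomial (by omega) _) (degle_monomial (by omega) _)

theorem degle_xpow_mul (hrel : ∀ r : R, x0 * ι0 r = ι0 (σ0 r) * x0 + ι0 (δ0 r))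
    {e : ℕ} {s : S} (h : DegLe ι0 x0 e s) : ∀ p, DegLe ι0 x0 (e + p) (x0 ^ p * s)
  | 0 => by simpa using h
  | p + 1 => by
      have := degle_xmul hrel (degle_xpow_mul hrel h p)
      rw [pow_succ', mul_assoc]
      exact this

theorem degle_mul (hrel : ∀ r : R, x0 * ι0 r = ι0 (σ0 r) * x0 + ι0 (δ0 r))
    {d e : ℕ} {r s : S} (hr : DegLe ι0 x0 d r) (hs : DegLe ι0 x0 e s) :
    DegLe ι0 x0 (d + e) (r * s) := by
  obtain ⟨b, rfl⟩ := hr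
  rw [Finset.sum_mul]
  refine degle_sum fun p hpm => ?_
  rw [mul_assoc]
  refine degle_const_mul _ (degle_mono ?_ (degle_xpow_mul hrel hs p))
  have := Finset.mem_range.mp hpm
  omega

theorem degle_pow (hrel : ∀ r : R, x0 * ι0 r = ι0 (σ0 r) * x0 + ι0 (δ0 r))
    {y : S} (hy : DegLe ι0 x0 1 y) : ∀ t, DegLe ι0 x0 t (y ^ t)
  | 0 => by simpa using degle_monomial (ι0 := ι0) (x0 := x0) (le_refl 0) (1 : R)
  | t + 1 => by
      rw [pow_succ]
      exact degle_mul hrel (degle_pow hrel hy t) hy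

theorem degle_map (hrel : ∀ r : R, x0 * ι0 r = ι0 (σ0 r) * x0 + ι0 (δ0 r))
    (ψ : S →+* S) (hψι : ∀ c : R, ∃ c', ψ (ι0 c) = ι0 c')
    (hψx : DegLe ι0 x0 1 (ψ x0)) {d : ℕ} {r : S} (h : DegLe ι0 x0 d r) :
    DegLe ι0 x0 d (ψ r) := by
  obtain ⟨b, rfl⟩ := h
  rw [map_sum]
  refine degle_sum fun t htm => ?_
  rw [map_mul, map_pow]
  obtain ⟨c', hc'⟩ := hψι (b t)
  rw [hc']
  have ht := Finset.mem_range.mp htm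
  exact degle_const_mul _ (degle_mono (by omega) (degle_pow hrel hψx t))


theorem ore_key {A : ℕ → Type u} [∀ i, Ring (A i)] (n : ℕ)
    (ι : ∀ i, A i →+* A (i + 1)) (x : ∀ i, A (i + 1))
    (σ : ∀ i, A i ≃+* A i) (δ : ∀ i, A i → A i)
    (hOre : ∀ i < n, IsOreExtension (ι i) (x i) (σ i) (δ i))
    (σ₀ : ℕ → A 0 ≃+* A 0)
    (hσ₀ : ∀ i (_ : i < n) (r : A 0),
      σ i (emb ι 0 i (Nat.zero_le i) r) = emb ι 0 i (Nat.zero_le i) (σ₀ i r))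
    (aC : ℕ → ℕ → A 0) (haC : ∀ j i, j < i → i < n → IsUnit (aC i j))
    (cC : ∀ j : ℕ, ℕ → A j)
    (hx : ∀ j i (hj : j < i) (hi : i < n),
      σ i (emb ι (j + 1) i hj (x j))
        = emb ι 0 i (Nat.zero_le i) (aC i j) * emb ι (j + 1) i hj (x j)
          + emb ι j i (le_of_lt hj) (cC j i)) :
    ∀ i (_ : i < n) (j) (hj : j ≤ i), ∃ τ : A j ≃+* A j,
      ∀ a : A j, σ i (emb ι j i hj a) = emb ι j i hj (τ a) := by
  intro i hi j
  induction j with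
  | zero => exact fun hj => ⟨σ₀ i, fun a => hσ₀ i hi a⟩
  | succ j IH =>
    intro hj
    have hse : j ≤ i := Nat.le_of_succ_le hj
    obtain ⟨τj, hτj⟩ := IH hse
    have hjn : j < n := by omega
    have hfinj : Function.Injective (emb ι (j + 1) i hj) :=
      emb_inj ι hj (fun k _ hk => (hOre k (by omega)).inj)
    have hembj : ∀ b : A j, emb ι (j + 1) i hj (ι j b) = emb ι j i hse b :=
      fun b => emb_comp ι hj b
    have hτj' : ∀ b : A j,
        σ i (emb ι (j + 1) i hj (ι j b)) = emb ι (j + 1) i hj (ι j (τj b)) := by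
      intro b; rw [hembj, hembj]; exact hτj b
    have hτjsymm : ∀ b : A j,
        (σ i).symm (emb ι (j + 1) i hj (ι j b)) = emb ι (j + 1) i hj (ι j (τj.symm b)) := by
      intro b
      have h := hτj' (τj.symm b)
      rw [RingEquiv.apply_symm_apply] at h
      rw [← h, RingEquiv.symm_apply_apply]
    have hfwd : ∀ s : A (j + 1), ∃ y,
        emb ι (j + 1) i hj y = σ i (emb ι (j + 1) i hj s) := by
      intro s
      obtain ⟨m, b, rfl⟩ := (hOre j hjn).gen s
      refine RingHom.mem_range.mp ?_
      simp only [map_sum, map_mul, map_pow]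
      refine Subring.sum_mem _ fun t _ => ?_
      refine Subring.mul_mem _ ?_ (Subring.pow_mem _ ?_ t)
      · rw [hτj']
        exact RingHom.mem_range.mpr ⟨_, rfl⟩
      · rw [hx j i hj hi]
        refine Subring.add_mem _
          (Subring.mul_mem _ ?_ (RingHom.mem_range.mpr ⟨x j, rfl⟩)) ?_
        · exact RingHom.mem_range.mpr
            ⟨emb ι 0 (j + 1) (Nat.zero_le _) (aC i j), emb_trans ι (Nat.zero_le _) hj _⟩
        · exact RingHom.mem_range.mpr ⟨ι j (cC j i), hembj _⟩
    obtain ⟨u, hu⟩ := (haC j i (by omega) hi).map ((σ₀ i).symm : A 0 ≃+* A 0)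
    have hσ₀symm : ∀ r : A 0, (σ i).symm (emb ι 0 i (Nat.zero_le i) r)
        = emb ι 0 i (Nat.zero_le i) ((σ₀ i).symm r) := by
      intro r
      have h := hσ₀ i hi ((σ₀ i).symm r)
      rw [RingEquiv.apply_symm_apply] at h
      rw [← h, RingEquiv.symm_apply_apply]
    have hau : aC i j = σ₀ i ↑u := by rw [hu, RingEquiv.apply_symm_apply]
    have h1 : σ₀ i ↑u⁻¹ * aC i j = 1 := by
      rw [hau, ← map_mul, Units.inv_mul, map_one]
    have hX : (σ i).symm (emb ι (j + 1) i hj (x j))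
        = emb ι 0 i (Nat.zero_le i) (↑u⁻¹ : A 0)
          * (emb ι (j + 1) i hj (x j)
              - emb ι (j + 1) i hj (ι j (τj.symm (cC j i)))) := by
      have hXX : σ i (emb ι 0 i (Nat.zero_le i) (↑u⁻¹ : A 0)
          * (emb ι (j + 1) i hj (x j)
              - emb ι (j + 1) i hj (ι j (τj.symm (cC j i)))))
          = emb ι (j + 1) i hj (x j) := by
        rw [map_mul, map_sub, hσ₀ i hi, hx j i hj hi, hτj', RingEquiv.apply_symm_apply,
          hembj, add_sub_cancel_right, ← mul_assoc, ← map_mul, h1, map_one, one_mul]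
      conv_lhs => rw [← hXX]
      rw [RingEquiv.symm_apply_apply]
    have hbwd : ∀ s : A (j + 1), ∃ y,
        emb ι (j + 1) i hj y = (σ i).symm (emb ι (j + 1) i hj s) := by
      intro s
      obtain ⟨m, b, rfl⟩ := (hOre j hjn).gen s
      refine RingHom.mem_range.mp ?_
      simp only [map_sum, map_mul, map_pow]
      refine Subring.sum_mem _ fun t _ => ?_
      refine Subring.mul_mem _ ?_ (Subring.pow_mem _ ?_ t)
      · rw [hτjsymm]
        exact RingHom.mem_range.mpr ⟨_, rfl⟩
      · rw [hX]
        refine Subring.mul_mem _ ?_ (Subring.sub_mem _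
          (RingHom.mem_range.mpr ⟨x j, rfl⟩) (RingHom.mem_range.mpr ⟨_, rfl⟩))
        exact RingHom.mem_range.mpr
          ⟨emb ι 0 (j + 1) (Nat.zero_le _) (↑u⁻¹ : A 0), emb_trans ι (Nat.zero_le _) hj _⟩
    choose g hg using hfwd
    choose g' hg' using hbwd
    have hli : Function.LeftInverse g' g := fun s =>
      hfinj (by rw [hg', hg, RingEquiv.symm_apply_apply])
    have hri : Function.RightInverse g' g := fun s =>
      hfinj (by rw [hg, hg', RingEquiv.apply_symm_apply])
    have hmul : ∀ a b : A (j + 1), g (a * b) = g a * g b := fun a b =>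
      hfinj (by simp only [hg, map_mul])
    have hadd : ∀ a b : A (j + 1), g (a + b) = g a + g b := fun a b =>
      hfinj (by simp only [hg, map_add])
    exact ⟨⟨⟨g, g', hli, hri⟩, hmul, hadd⟩, fun a => (hg a).symm⟩

/-- Let `R_i = R_{i-1}[x_i;σ_i,δ_i]` be iterated Ore extensions such
that each `σ_i` restricts to an automorphism of `R₀` and `σ_i x_j = a_{ij} x_j + c_{ij}`
with `a_{ij} ∈ R₀` invertible and `c_{ij} ∈ R_{j-1}`, for `j < i`. Then `σ_i` restricts
to an automorphism of `R_j` for all `j < i`, which for `j ≥ 1` respects the filtration of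
`R_j` by the degree in `x_j`.
(Indices shifted: `σ i, δ i, x i` stand for `σ_{i+1}, δ_{i+1}, x_{i+1}`; `aC i j`,
`cC j i` stand for `a_{(i+1)(j+1)} ∈ R₀` and `c_{(i+1)(j+1)} ∈ R_j = A j`.) -/
theorem restricted_automorphisms_of_iterated_ore_extension
    {A : ℕ → Type u} [∀ i, Ring (A i)] (n : ℕ) (hn : 1 ≤ n)
    (ι : ∀ i, A i →+* A (i + 1)) (x : ∀ i, A (i + 1))
    (σ : ∀ i, A i ≃+* A i) (δ : ∀ i, A i → A i)
    (hOre : ∀ i < n, IsOreExtension (ι i) (x i) (σ i) (δ i))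
    -- (i) each σ_i restricts to an automorphism σ₀ i of R₀
    (σ₀ : ℕ → A 0 ≃+* A 0)
    (hσ₀ : ∀ i (_ : i < n) (r : A 0),
      σ i (emb ι 0 i (Nat.zero_le i) r) = emb ι 0 i (Nat.zero_le i) (σ₀ i r))
    -- (ii) σ_i x_j = a_{ij} x_j + c_{ij}
    (aC : ℕ → ℕ → A 0) (haC : ∀ j i, j < i → i < n → IsUnit (aC i j))
    (cC : ∀ j : ℕ, ℕ → A j)
    (hx : ∀ j i (hj : j < i) (hi : i < n),
      σ i (emb ι (j + 1) i hj (x j))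
        = emb ι 0 i (Nat.zero_le i) (aC i j) * emb ι (j + 1) i hj (x j)
          + emb ι j i (le_of_lt hj) (cC j i)) :
    -- σ_i restricts to an automorphism of R_j for every j ≤ i < n
    (∀ i (_ : i < n) (j) (hj : j ≤ i), ∃ τ : A j ≃+* A j,
      ∀ a : A j, σ i (emb ι j i hj a) = emb ι j i hj (τ a)) ∧
    -- for j ≥ 1 the restriction respects the filtration by the degree in x_j
    ∀ i (_ : i < n) (j') (hj : j' + 1 ≤ i), ∃ τ : A (j' + 1) ≃+* A (j' + 1),
      (∀ a : A (j' + 1), σ i (emb ι (j' + 1) i hj a) = emb ι (j' + 1) i hj (τ a)) ∧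
      ∀ (d : ℕ) (r : A (j' + 1)),
        (∃ b : ℕ → A j', r = ∑ t ∈ Finset.range (d + 1), ι j' (b t) * x j' ^ t) ↔
        (∃ b : ℕ → A j', τ r = ∑ t ∈ Finset.range (d + 1), ι j' (b t) * x j' ^ t) := by
  have key := ore_key n ι x σ δ hOre σ₀ hσ₀ aC haC cC hx
  refine ⟨key, ?_⟩
  intro i hi j' hj
  obtain ⟨τ, hτ⟩ := key i hi (j' + 1) hj
  obtain ⟨τ', hτ'⟩ := key i hi j' (Nat.le_of_succ_le hj)
  have hse : j' ≤ i := Nat.le_of_succ_le hj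
  have hj'n : j' < n := by omega
  have hrel := (hOre j' hj'n).rel
  have hfinj : Function.Injective (emb ι (j' + 1) i hj) :=
    emb_inj ι hj (fun k _ hk => (hOre k (by omega)).inj)
  have hcomm : ∀ b : A j', τ (ι j' b) = ι j' (τ' b) := by
    intro b
    apply hfinj
    rw [← hτ, emb_comp ι hj (h' := hse), emb_comp ι hj (h' := hse) (a := τ' b)]
    exact hτ' b
  have hτx : τ (x j')
      = emb ι 0 (j' + 1) (Nat.zero_le _) (aC i j') * x j' + ι j' (cC j' i) := by
    apply hfinj
    rw [← hτ, hx j' i hj hi, map_add, map_mul,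
      emb_trans ι (Nat.zero_le (j' + 1)) hj, emb_comp ι hj (h' := hse)]
  obtain ⟨u, hu⟩ := haC j' i (by omega) hi
  set α' : A j' := τ'.symm (emb ι 0 j' (Nat.zero_le j') ↑u⁻¹) with hα'
  have habk : emb ι 0 j' (Nat.zero_le j') (↑u⁻¹ : A 0)
      * emb ι 0 j' (Nat.zero_le j') (aC i j') = 1 := by
    rw [← map_mul, ← hu, Units.inv_mul, map_one]
  have hτz : τ (ι j' α' * x j' - ι j' (α' * τ'.symm (cC j' i))) = x j' := by
    rw [map_sub, map_mul, hcomm, hcomm, map_mul τ', RingEquiv.apply_symm_apply,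
      RingEquiv.apply_symm_apply, hτx,
      emb_succ ι (Nat.zero_le j') (h' := Nat.zero_le (j' + 1))]
    simp only [RingHom.coe_comp, Function.comp_apply]
    rw [mul_add, ← mul_assoc, ← map_mul (ι j'), habk, map_one, one_mul,
      ← map_mul (ι j')]
    exact add_sub_cancel_right _ _
  have hτsx : τ.symm (x j') = ι j' α' * x j' - ι j' (α' * τ'.symm (cC j' i)) := by
    conv_lhs => rw [← hτz]
    rw [RingEquiv.symm_apply_apply]
  have hτsι : ∀ b : A j', τ.symm (ι j' b) = ι j' (τ'.symm b) := by
    intro b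
    have h := hcomm (τ'.symm b)
    rw [RingEquiv.apply_symm_apply] at h
    rw [← h, RingEquiv.symm_apply_apply]
  have hy : DegLe (ι j') (x j') 1 (τ (x j')) := by
    rw [hτx, emb_succ ι (Nat.zero_le j') (h' := Nat.zero_le (j' + 1))]
    simp only [RingHom.coe_comp, Function.comp_apply]
    refine degle_add ?_ ?_
    · simpa using degle_monomial (ι0 := ι j') (x0 := x j') (le_refl 1) (emb ι 0 j' (Nat.zero_le j') (aC i j'))
    · simpa using degle_monomial (ι0 := ι j') (x0 := x j') (Nat.zero_le 1) (cC j' i)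
  have hz : DegLe (ι j') (x j') 1 (τ.symm (x j')) := by
    rw [hτsx, sub_eq_add_neg]
    refine degle_add ?_ (degle_neg ?_)
    · simpa using degle_monomial (ι0 := ι j') (x0 := x j') (le_refl 1) α'
    · simpa using degle_monomial (ι0 := ι j') (x0 := x j') (Nat.zero_le 1) (α' * τ'.symm (cC j' i))
  refine ⟨τ, hτ, fun d r => ⟨fun h => ?_, fun h => ?_⟩⟩
  · exact degle_map hrel τ.toRingHom (fun c => ⟨τ' c, hcomm c⟩) hy h
  · have h2 := degle_map hrel τ.symm.toRingHom (fun c => ⟨τ'.symm c, hτsι c⟩) hz h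
    have h3 : DegLe (ι j') (x j') d r := by simpa using h2
    exact h3
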